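/- arXiv:2601.13566 — 2 statements merged into one kernel-verified Lean document; each statement's English description precedes it below -/
import Mathlib

section
/- Stationarity of the softmax over coherence under Gibbs sampling: assume σ has full support and let β > 0. Then for every d-policy π', Σ over all d-policies π of X^β(π)·K^β(π,π') equals X^β(π'); i.e., X^β is a stationary distribution of the Gibbs transition kernel K^β. -/
open Finset

/-- A learning system: a commutative additive monoid `M` of stochastic policies,
a finite nonempty set `S` of contexts, a finite nonempty behavior set `A s` for each
context `s`, and an inference function `inf` assigning to each policy and context a
probability mass function on the behaviors of that context, satisfying the chain rule. -/
structure LearningSystem (M : Type) [AddCommMonoid M] (S : Type) [Fintype S] [DecidableEq S] :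
    Type where
  A : S → Finset M
  A_nonempty : ∀ s, (A s).Nonempty
  inf : M → S → M → ℝ
  inf_nonneg : ∀ φ s a, 0 ≤ inf φ s a
  inf_eq_zero_of_not_mem : ∀ φ s a, a ∉ A s → inf φ s a = 0
  inf_sum_one : ∀ φ s, ∑ a ∈ A s, inf φ s a = 1
  chain_rule : ∀ (φ : M) (s₁ s₂ : S) (a₁ a₂ : M), a₁ ∈ A s₁ → a₂ ∈ A s₂ →
    inf φ s₁ a₁ * inf (φ + a₁) s₂ a₂ = inf φ s₂ a₂ * inf (φ + a₂) s₁ a₁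

namespace LearningSystem

variable {M S : Type} [AddCommMonoid M] [Fintype S] [DecidableEq S]

/-- A deterministic policy (d-policy): an assignment of a behavior `π s ∈ A s` to
every context `s ∈ S`. -/
abbrev DPolicy (L : LearningSystem M S) : Type := ∀ s : S, {a : M // a ∈ L.A s}

/-- `σ` has full support: every behavior of every context has positive probability
under every prior policy. -/
def FullSupport (L : LearningSystem M S) : Prop :=
  ∀ (φ : M) (s : S) (a : M), a ∈ L.A s → 0 < L.inf φ s a

/-- The coherence of a d-policy `π` relative to the prior policy `φ`, computed along
the enumeration `f` of contexts:
`∑ n, log₂ σ(φ + ∑_{m<n} π(f m), f n)(π (f n))`. -/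
noncomputable def cohAlong (L : LearningSystem M S) (φ : M) (π : L.DPolicy)
    {k : ℕ} (f : Fin k → S) : ℝ :=
  ∑ n : Fin k, Real.logb 2
    (L.inf (φ + ∑ m ∈ Finset.univ.filter (fun m => m < n), ((π (f m) : M)))
      (f n) ((π (f n) : M)))

/-- The product `∏ n, σ(φ + ∑_{m<n} π(f m), f n)(π (f n))` along the enumeration `f`. -/
noncomputable def prodAlong (L : LearningSystem M S) (φ : M) (π : L.DPolicy)
    {k : ℕ} (f : Fin k → S) : ℝ :=
  ∏ n : Fin k,
    L.inf (φ + ∑ m ∈ Finset.univ.filter (fun m => m < n), ((π (f m) : M)))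
      (f n) ((π (f n) : M))

/-- The coherence `χ(π)` (relative to the zero prior policy), with respect to the fixed
enumeration `e` of the contexts. -/
noncomputable def coherence (L : LearningSystem M S) {k : ℕ} (e : Fin k ≃ S)
    (π : L.DPolicy) : ℝ :=
  L.cohAlong 0 π ⇑e

/-- The softmax over coherence at inverse temperature `β`:
`X^β(π) = 2^(β χ(π)) / ∑_{π'} 2^(β χ(π'))`. -/
noncomputable def softmaxCoh (L : LearningSystem M S) {k : ℕ} (e : Fin k ≃ S) (β : ℝ)
    (π : L.DPolicy) : ℝ :=
  (2 : ℝ) ^ (β * L.coherence e π) / ∑ π' : L.DPolicy, (2 : ℝ) ^ (β * L.coherence e π')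

/-- The tempered inference function `σ^β(φ,s)(a) = σ(φ,s)(a)^β / ∑_{a'∈A_s} σ(φ,s)(a')^β`. -/
noncomputable def sigmaBeta (L : LearningSystem M S) (β : ℝ) (φ : M) (s : S) (a : M) : ℝ :=
  L.inf φ s a ^ β / ∑ a' ∈ L.A s, L.inf φ s a' ^ β

/-- The Gibbs transition kernel on d-policies:
`K^β(π,π') = (1/k) ∑_n 1[π'(s_m) = π(s_m) ∀ m ≠ n] · σ^β(∑_{m≠n} π(s_m), s_n)(π'(s_n))`. -/
noncomputable def gibbsKernel [DecidableEq M] (L : LearningSystem M S) {k : ℕ}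
    (e : Fin k ≃ S) (β : ℝ) (π π' : L.DPolicy) : ℝ :=
  ((k : ℝ))⁻¹ * ∑ n : Fin k,
    if ∀ m : Fin k, m ≠ n → π' (e m) = π (e m) then
      L.sigmaBeta β (∑ m ∈ Finset.univ.erase n, ((π (e m) : M))) (e n) ((π' (e n) : M))
    else 0

end LearningSystem

/-!
Write `w π = 2 ^ (β χ(π))`. Since `χ(π)` is a sum of `log₂` of conditional probabilities,
`w π = (∏ₙ σ(…, sₙ)(π sₙ)) ^ β`, and the chain rule makes this product independent of the order
in which the contexts are visited. Visiting `sₙ` last splits `w π` into a factor that only sees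
`π` off `sₙ` times `σ(φₙ, sₙ)(π sₙ) ^ β`, where `φₙ = ∑_{m ≠ n} π sₘ`. Hence every single-site
update of the Gibbs kernel satisfies detailed balance with respect to `w`, so the averaged kernel
`K^β` does as well; a stochastic kernel in detailed balance with `w` leaves `w` invariant.
-/

theorem Fintype.sum_ite_forall_ne_eq {ι R : Type*} [Fintype ι] [DecidableEq ι] {β : ι → Type*}
    [∀ i, Fintype (β i)] [∀ i, DecidableEq (β i)] [AddCommMonoid R] (y : ∀ i, β i) (i : ι)
    (F : β i → R) :
    ∑ x : ∀ j, β j, (if ∀ j, j ≠ i → x j = y j then F (x i) else 0) = ∑ a, F a := by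
  rw [← sum_filter]
  have hfilter : univ.filter (fun x : ∀ j, β j => ∀ j, j ≠ i → x j = y j) =
      univ.image (Function.update y i) := by
    ext x
    simp only [mem_filter, mem_univ, true_and, mem_image]
    exact ⟨fun h => ⟨x i, ((Function.eq_update_iff).2 ⟨rfl, h⟩).symm⟩,
      fun ⟨a, ha⟩ => ha ▸ fun j hj => Function.update_of_ne hj a y⟩
  rw [hfilter, sum_image fun a _ b _ h => Function.update_injective y i h]
  simp only [Function.update_self]

theorem Fintype.sum_mul_eq_of_detailed_balance {ι R : Type*} [Fintype ι] [Semiring R]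
    (w : ι → R) (K : ι → ι → R) (hbal : ∀ i j, w i * K i j = w j * K j i) (hK : ∀ i, ∑ j, K i j = 1)
    (j : ι) : ∑ i, w i * K i j = w j := by
  simp only [hbal _ j, ← mul_sum, hK, mul_one]

theorem Equiv.forall_ne_apply_eq_iff {α β : Type*} {γ : β → Type*} (e : α ≃ β) (a : α)
    (f g : ∀ b, γ b) : (∀ m, m ≠ a → f (e m) = g (e m)) ↔ ∀ b, b ≠ e a → f b = g b :=
  e.forall_congr fun m => by rw [e.injective.ne_iff]

namespace LearningSystem

variable {M S : Type} [AddCommMonoid M] [Fintype S] [DecidableEq S] (L : LearningSystem M S)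

noncomputable def prodList (π : L.DPolicy) : M → List S → ℝ
  | _, [] => 1
  | φ, s :: t => L.inf φ s (π s) * prodList π (φ + (π s : M)) t

theorem prodList_perm (π : L.DPolicy) {l₁ l₂ : List S} (h : l₁.Perm l₂) (φ : M) :
    L.prodList π φ l₁ = L.prodList π φ l₂ := by
  induction h generalizing φ with
  | nil => rfl
  | cons s _ ih => simp only [prodList, ih]
  | swap s t l =>
    simp only [prodList]
    rw [← mul_assoc, ← mul_assoc, L.chain_rule φ t s (π t) (π s) (π t).2 (π s).2,
      add_right_comm]
  | trans _ _ ih₁ ih₂ => rw [ih₁, ih₂]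

theorem prodList_append (π : L.DPolicy) (l₁ l₂ : List S) (φ : M) :
    L.prodList π φ (l₁ ++ l₂) =
      L.prodList π φ l₁ * L.prodList π (φ + (l₁.map fun s => (π s : M)).sum) l₂ := by
  induction l₁ generalizing φ with
  | nil => simp [prodList]
  | cons s t ih => simp only [List.cons_append, prodList, ih, List.map_cons, List.sum_cons,
      mul_assoc, add_assoc]

theorem prodList_congr {π π' : L.DPolicy} {l : List S} (h : ∀ s ∈ l, π s = π' s) (φ : M) :
    L.prodList π φ l = L.prodList π' φ l := by
  induction l generalizing φ with
  | nil => rfl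
  | cons s t ih =>
    simp only [prodList, h s List.mem_cons_self, ih fun x hx => h x (List.mem_cons_of_mem s hx)]

theorem prodList_nonneg (π : L.DPolicy) (l : List S) (φ : M) : 0 ≤ L.prodList π φ l := by
  induction l generalizing φ with
  | nil => exact zero_le_one
  | cons s t ih => exact mul_nonneg (L.inf_nonneg _ _ _) (ih _)

theorem prodAlong_eq_prodList (π : L.DPolicy) {k : ℕ} (f : Fin k → S) (φ : M) :
    L.prodAlong φ π f = L.prodList π φ (List.ofFn f) := by
  induction k generalizing φ with
  | zero => simp [prodAlong, prodList]
  | succ k ih =>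
    rw [List.ofFn_succ, prodList, ← ih, prodAlong, prodAlong, Fin.prod_univ_succ]
    congr 1
    · simp
    · refine prod_congr rfl fun n _ => ?_
      rw [sum_filter, sum_filter, Fin.sum_univ_succ, add_assoc]
      simp [Fin.succ_lt_succ_iff, Fin.succ_pos]

section Enumeration

variable {k : ℕ} (e : Fin k ≃ S) (β : ℝ)

theorem two_rpow_coherence (hfs : L.FullSupport) (π : L.DPolicy) :
    (2 : ℝ) ^ (β * L.coherence e π) = L.prodAlong 0 π e ^ β := by
  have hpos : ∀ n ∈ (univ : Finset (Fin k)), 0 < L.inf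
      (0 + ∑ m ∈ univ.filter (· < n), (π (e m) : M)) (e n) (π (e n)) :=
    fun n _ => hfs _ _ _ (π _).2
  have hcoh : L.coherence e π = Real.logb 2 (L.prodAlong 0 π e) :=
    (Real.logb_prod _ _ fun n hn => (hpos n hn).ne').symm
  have hprod : 0 < L.prodAlong 0 π e := prod_pos hpos
  rw [hcoh, mul_comm, Real.rpow_mul zero_le_two, Real.rpow_logb zero_lt_two one_lt_two.ne' hprod]

theorem prodAlong_eq_prodList_erase_mul (π : L.DPolicy) (n : Fin k) :
    L.prodAlong 0 π e = L.prodList π 0 ((List.ofFn e).erase (e n)) *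
      L.inf (∑ m ∈ univ.erase n, (π (e m) : M)) (e n) (π (e n)) := by
  have hnodup : (List.ofFn e).Nodup := List.nodup_ofFn.2 e.injective
  have hperm : (List.ofFn e).Perm ((List.ofFn e).erase (e n) ++ [e n]) :=
    (List.perm_cons_erase (List.mem_ofFn.2 ⟨n, rfl⟩)).trans
      (List.perm_append_singleton _ _).symm
  have hsum : (((List.ofFn e).erase (e n)).map fun s => (π s : M)).sum =
      ∑ m ∈ univ.erase n, (π (e m) : M) := by
    rw [← List.sum_toFinset _ (hnodup.erase _)]
    refine (sum_equiv e (fun m => ?_) fun _ _ => rfl).symm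
    simp [hnodup.mem_erase_iff, List.mem_ofFn, e.injective.ne_iff]
  rw [L.prodAlong_eq_prodList π e, L.prodList_perm π hperm, L.prodList_append, hsum, zero_add]
  simp [prodList]

theorem two_rpow_coherence_mul_inf_rpow_comm (hfs : L.FullSupport) (n : Fin k)
    {π π' : L.DPolicy} (h : ∀ s, s ≠ e n → π' s = π s) :
    (2 : ℝ) ^ (β * L.coherence e π) *
        L.inf (∑ m ∈ univ.erase n, (π (e m) : M)) (e n) (π' (e n)) ^ β =
      (2 : ℝ) ^ (β * L.coherence e π') *
        L.inf (∑ m ∈ univ.erase n, (π (e m) : M)) (e n) (π (e n)) ^ β := by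
  have hnodup : (List.ofFn e).Nodup := List.nodup_ofFn.2 e.injective
  have hrest : L.prodList π' 0 ((List.ofFn e).erase (e n)) =
      L.prodList π 0 ((List.ofFn e).erase (e n)) :=
    L.prodList_congr (fun s hs => h s (hnodup.mem_erase_iff.1 hs).1) 0
  have hφ : ∑ m ∈ univ.erase n, (π' (e m) : M) = ∑ m ∈ univ.erase n, (π (e m) : M) :=
    sum_congr rfl fun m hm => by rw [h _ (e.injective.ne (ne_of_mem_erase hm))]
  rw [L.two_rpow_coherence e β hfs, L.two_rpow_coherence e β hfs,
    L.prodAlong_eq_prodList_erase_mul e π n, L.prodAlong_eq_prodList_erase_mul e π' n, hrest, hφ,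
    Real.mul_rpow (L.prodList_nonneg _ _ _) (L.inf_nonneg _ _ _),
    Real.mul_rpow (L.prodList_nonneg _ _ _) (L.inf_nonneg _ _ _)]
  ring

theorem sum_sigmaBeta (hfs : L.FullSupport) (φ : M) (s : S) :
    ∑ a ∈ L.A s, L.sigmaBeta β φ s a = 1 := by
  have hpos : 0 < ∑ a ∈ L.A s, L.inf φ s a ^ β :=
    sum_pos (fun a ha => Real.rpow_pos_of_pos (hfs φ s a ha) β) (L.A_nonempty s)
  simp only [sigmaBeta, ← sum_div, div_self hpos.ne']

variable [DecidableEq M]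

noncomputable def siteKernel (n : Fin k) (π π' : L.DPolicy) : ℝ :=
  if ∀ m : Fin k, m ≠ n → π' (e m) = π (e m) then
    L.sigmaBeta β (∑ m ∈ univ.erase n, (π (e m) : M)) (e n) (π' (e n))
  else 0

theorem gibbsKernel_eq_inv_mul_sum_siteKernel (π π' : L.DPolicy) :
    L.gibbsKernel e β π π' = (k : ℝ)⁻¹ * ∑ n, L.siteKernel e β n π π' :=
  rfl

theorem sum_siteKernel (hfs : L.FullSupport) (n : Fin k) (π : L.DPolicy) :
    ∑ π', L.siteKernel e β n π π' = 1 := by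
  simp only [siteKernel, Equiv.forall_ne_apply_eq_iff]
  rw [Fintype.sum_ite_forall_ne_eq π (e n) fun a => L.sigmaBeta β _ (e n) a, sum_coe_sort,
    L.sum_sigmaBeta β hfs]

theorem two_rpow_coherence_mul_siteKernel_comm (hfs : L.FullSupport) (n : Fin k)
    (π π' : L.DPolicy) :
    (2 : ℝ) ^ (β * L.coherence e π) * L.siteKernel e β n π π' =
      (2 : ℝ) ^ (β * L.coherence e π') * L.siteKernel e β n π' π := by
  simp only [siteKernel, Equiv.forall_ne_apply_eq_iff]
  by_cases h : ∀ s, s ≠ e n → π' s = π s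
  · have h' : ∀ s, s ≠ e n → π s = π' s := fun s hs => (h s hs).symm
    have hφ : ∑ m ∈ univ.erase n, (π' (e m) : M) = ∑ m ∈ univ.erase n, (π (e m) : M) :=
      sum_congr rfl fun m hm => by rw [h _ (e.injective.ne (ne_of_mem_erase hm))]
    rw [if_pos h, if_pos h', hφ, sigmaBeta, sigmaBeta, ← mul_div_assoc, ← mul_div_assoc,
      L.two_rpow_coherence_mul_inf_rpow_comm e β hfs n h]
  · have h' : ¬∀ s, s ≠ e n → π s = π' s := fun h' => h fun s hs => (h' s hs).symm
    rw [if_neg h, if_neg h', mul_zero, mul_zero]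

theorem two_rpow_coherence_mul_gibbsKernel_comm (hfs : L.FullSupport) (π π' : L.DPolicy) :
    (2 : ℝ) ^ (β * L.coherence e π) * L.gibbsKernel e β π π' =
      (2 : ℝ) ^ (β * L.coherence e π') * L.gibbsKernel e β π' π := by
  simp only [gibbsKernel_eq_inv_mul_sum_siteKernel, mul_left_comm _ (k : ℝ)⁻¹, mul_sum,
    L.two_rpow_coherence_mul_siteKernel_comm e β hfs _ π π']

theorem sum_gibbsKernel (hfs : L.FullSupport) (hk : k ≠ 0) (π : L.DPolicy) :
    ∑ π', L.gibbsKernel e β π π' = 1 := by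
  simp only [gibbsKernel_eq_inv_mul_sum_siteKernel, ← mul_sum]
  rw [sum_comm]
  simp only [L.sum_siteKernel e β hfs, sum_const, card_univ, Fintype.card_fin, nsmul_eq_mul,
    mul_one]
  exact inv_mul_cancel₀ (Nat.cast_ne_zero.2 hk)

end Enumeration

end LearningSystem

theorem gibbs_stationary_general {M S : Type} [AddCommMonoid M] [DecidableEq M]
    [Fintype S] [DecidableEq S] [Nonempty S] (L : LearningSystem M S)
    (hfs : L.FullSupport) {k : ℕ} (e : Fin k ≃ S) (β : ℝ)
    (π' : L.DPolicy) :
    ∑ π : L.DPolicy, L.softmaxCoh e β π * L.gibbsKernel e β π π' =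
      L.softmaxCoh e β π' := by
  have hk : k ≠ 0 := (Fin.pos_iff_nonempty.2 e.nonempty).ne'
  simp only [LearningSystem.softmaxCoh, div_mul_eq_mul_div, ← sum_div]
  rw [Fintype.sum_mul_eq_of_detailed_balance _ _
    (L.two_rpow_coherence_mul_gibbsKernel_comm e β hfs) (L.sum_gibbsKernel e β hfs hk)]

/-- Stationarity of the softmax over coherence under Gibbs sampling: if `σ` has full
support and `β > 0`, then for every d-policy `π'`,
`∑_π X^β(π) · K^β(π,π') = X^β(π')`; i.e., `X^β` is a stationary distribution of the
Gibbs transition kernel `K^β`. -/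
theorem gibbs_stationary {M S : Type} [AddCommMonoid M] [DecidableEq M]
    [Fintype S] [DecidableEq S] [Nonempty S] (L : LearningSystem M S)
    (hfs : L.FullSupport) {k : ℕ} (e : Fin k ≃ S) (β : ℝ) (hβ : 0 < β)
    (π' : L.DPolicy) :
    ∑ π : L.DPolicy, L.softmaxCoh e β π * L.gibbsKernel e β π π' =
      L.softmaxCoh e β π' :=
  gibbs_stationary_general L hfs e β π'
end

section
/- Uniform convergence via coherence (Occam/PAC bound with prior 2^{χ}): assume σ has full support. For every δ ∈ (0,1), with probability at least 1−δ over the i.i.d. uniform draw of the training contexts ŝ₁,…,ŝ_N, the inequality |α(π;π*) − α_train(π;π*)| ≤ √((−2χ(π) + log₂ e + log₂(1/δ))/(2N)) holds simultaneously for all d-policies π. -/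
open Finset

namespace LearningSystem

variable {M S : Type} [AddCommMonoid M] [Fintype S] [DecidableEq S]

/-- Accuracy of `π` with respect to the ground truth `πs`:
`α(π;π*) = (1/|S|) ∑_{s∈S} 1[π(s) = π*(s)]`. -/
noncomputable def accuracy [DecidableEq M] (L : LearningSystem M S)
    (π πs : L.DPolicy) : ℝ :=
  (∑ s : S, if (π s : M) = ((πs s : M)) then (1 : ℝ) else 0) / (Fintype.card S : ℝ)

/-- Training accuracy of `π` on the training contexts `shat`:
`α_train(π;π*) = (1/N) ∑_i 1[π(ŝ_i) = π*(ŝ_i)]`. -/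
noncomputable def trainAccuracy [DecidableEq M] (L : LearningSystem M S) {N : ℕ}
    (shat : Fin N → S) (π πs : L.DPolicy) : ℝ :=
  (∑ i : Fin N, if (π (shat i) : M) = ((πs (shat i) : M)) then (1 : ℝ) else 0) / (N : ℝ)


lemma sumprod (L : LearningSystem M S) : ∀ (k : ℕ) (C : Fin k → S) (φ : M),
    ∑ g : (∀ n : Fin k, {a : M // a ∈ L.A (C n)}), ∏ n : Fin k,
      L.inf (φ + ∑ m ∈ Finset.univ.filter (fun m => m < n), ((g m : M))) (C n) ((g n : M)) = 1 := by
  intro k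
  induction k with
  | zero => intro C φ; simp
  | succ k ih =>
    intro C φ
    rw [← Equiv.sum_comp (Fin.consEquiv (fun n : Fin (k+1) => {a : M // a ∈ L.A (C n)}))]
    rw [Fintype.sum_prod_type]
    have key : ∀ (a : {a : M // a ∈ L.A (C 0)}) (g : ∀ n : Fin k, {a : M // a ∈ L.A (C n.succ)}),
        (∏ n : Fin (k+1),
          L.inf (φ + ∑ m ∈ Finset.univ.filter (fun m => m < n),
              (((Fin.consEquiv (fun n : Fin (k+1) => {a : M // a ∈ L.A (C n)})) (a, g) m : M)))
            (C n) (((Fin.consEquiv (fun n : Fin (k+1) => {a : M // a ∈ L.A (C n)})) (a, g) n : M))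
          = L.inf φ (C 0) (a : M) * ∏ n : Fin k,
            L.inf ((φ + (a:M)) + ∑ m ∈ Finset.univ.filter (fun m => m < n), ((g m : M)))
              (C n.succ) ((g n : M))) := by
      intro a g
      have hcons : ∀ m : Fin (k+1),
          ((Fin.consEquiv (fun n : Fin (k+1) => {a : M // a ∈ L.A (C n)})) (a, g) m : M)
          = ((Fin.cons (α := fun n : Fin (k+1) => {a : M // a ∈ L.A (C n)}) a g m : M)) := by
        intro m; rfl
      simp only [hcons]
      rw [Fin.prod_univ_succ]
      congr 1
      · have : (Finset.univ.filter (fun m : Fin (k+1) => m < 0)) = ∅ := by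
          apply Finset.filter_false_of_mem
          intro m _
          exact Fin.not_lt_zero m
        rw [this]
        simp
      · apply Finset.prod_congr rfl
        intro n _
        have hsum : ∑ m ∈ Finset.univ.filter (fun m : Fin (k+1) => m < n.succ),
            ((Fin.cons (α := fun n : Fin (k+1) => {a : M // a ∈ L.A (C n)}) a g m : M))
            = (a : M) + ∑ m ∈ Finset.univ.filter (fun m : Fin k => m < n), ((g m : M)) := by
          rw [Finset.sum_filter, Finset.sum_filter, Fin.sum_univ_succ]
          simp only [Fin.cons_zero, Fin.cons_succ, Fin.succ_lt_succ_iff, Fin.succ_pos, if_true]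
        rw [hsum, Fin.cons_succ, add_assoc]
    simp only [key]
    have hinner : ∀ x : {a : M // a ∈ L.A (C 0)},
        (∑ g : (∀ i : Fin k, {a : M // a ∈ L.A (C i.succ)}),
          L.inf φ (C 0) (x:M) * ∏ n : Fin k,
            L.inf (φ + (x:M) + ∑ m ∈ Finset.univ.filter (fun m => m < n), ((g m : M)))
              (C n.succ) ((g n : M))) = L.inf φ (C 0) (x:M) := by
      intro x
      rw [← Finset.mul_sum, ih (fun n => C n.succ) (φ + (x:M)), mul_one]
    simp only [hinner]
    rw [Finset.sum_coe_sort (L.A (C 0)) (fun a => L.inf φ (C 0) a)]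
    exact L.inf_sum_one φ (C 0)

lemma inf_le_one (L : LearningSystem M S) (φ : M) (s : S) {a : M} (ha : a ∈ L.A s) :
    L.inf φ s a ≤ 1 := by
  rw [← L.inf_sum_one φ s]
  exact Finset.single_le_sum (fun b _ => L.inf_nonneg φ s b) ha

lemma sum_prodAlong (L : LearningSystem M S) {k : ℕ} (e : Fin k ≃ S) :
    ∑ π : L.DPolicy, L.prodAlong 0 π ⇑e = 1 := by
  rw [← Equiv.sum_comp (Equiv.piCongrLeft (fun s => {a : M // a ∈ L.A s}) e)]
  have h : ∀ g : (∀ n : Fin k, {a : M // a ∈ L.A (e n)}),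
      L.prodAlong 0 ((Equiv.piCongrLeft (fun s => {a : M // a ∈ L.A s}) e) g) ⇑e
      = ∏ n : Fin k, L.inf (0 + ∑ m ∈ Finset.univ.filter (fun m => m < n), ((g m : M)))
          (e n) ((g n) : M) := by
    intro g
    unfold prodAlong
    simp only [Equiv.piCongrLeft_apply_apply]
  simp only [h]
  exact L.sumprod k ⇑e 0

lemma prodAlong_pos (L : LearningSystem M S) (hfs : L.FullSupport) {k : ℕ} (e : Fin k ≃ S)
    (π : L.DPolicy) : 0 < L.prodAlong 0 π ⇑e := by
  apply Finset.prod_pos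
  intro n _
  exact hfs _ _ _ (π (e n)).2

lemma rpow_coherence (L : LearningSystem M S) (hfs : L.FullSupport) {k : ℕ} (e : Fin k ≃ S)
    (π : L.DPolicy) : (2:ℝ) ^ (L.coherence e π) = L.prodAlong 0 π ⇑e := by
  have hpos : ∀ n : Fin k, 0 < L.inf (0 + ∑ m ∈ Finset.univ.filter (fun m => m < n),
      ((π (e m) : M))) (e n) ((π (e n)) : M) := fun n => hfs _ _ _ (π (e n)).2
  have hχ : L.coherence e π = Real.logb 2 (L.prodAlong 0 π ⇑e) := by
    unfold coherence cohAlong prodAlong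
    rw [Real.logb_prod]
    intro n _
    exact (hpos n).ne'
  rw [hχ]
  exact Real.rpow_logb (by norm_num) (by norm_num) (L.prodAlong_pos hfs e π)

lemma coherence_nonpos (L : LearningSystem M S) (hfs : L.FullSupport) {k : ℕ} (e : Fin k ≃ S)
    (π : L.DPolicy) : L.coherence e π ≤ 0 := by
  unfold coherence cohAlong
  apply Finset.sum_nonpos
  intro n _
  apply Real.logb_nonpos (by norm_num)
  · exact (L.inf_nonneg _ _ _)
  · exact L.inf_le_one _ _ (π (e n)).2

end LearningSystem


lemma quinticA (u : ℝ) (h0 : 2/7 ≤ u) (h1 : u ≤ 1) :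
    (7*u-2)^2 * ((1+u)*(1+u^2)) ≤ 140 * u^4 := by
  nlinarith [mul_nonneg (sub_nonneg.2 h0) (sub_nonneg.2 h1), sq_nonneg (u-2/7), sq_nonneg (1-u),
    mul_nonneg (mul_nonneg (sub_nonneg.2 h0) (sub_nonneg.2 h1)) (sub_nonneg.2 h0),
    mul_nonneg (mul_nonneg (sub_nonneg.2 h0) (sub_nonneg.2 h1)) (sub_nonneg.2 h1),
    mul_nonneg (mul_nonneg (mul_nonneg (sub_nonneg.2 h0) (sub_nonneg.2 h1)) (sub_nonneg.2 h0)) (sub_nonneg.2 h0),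
    mul_nonneg (mul_nonneg (mul_nonneg (sub_nonneg.2 h0) (sub_nonneg.2 h1)) (sub_nonneg.2 h1)) (sub_nonneg.2 h1),
    mul_nonneg (mul_nonneg (mul_nonneg (sub_nonneg.2 h0) (sub_nonneg.2 h1)) (sub_nonneg.2 h0)) (sub_nonneg.2 h1)]

lemma polyA (p E t : ℝ) (hp0 : 0 ≤ p) (hp1 : p ≤ 1) (ht : 0 ≤ t) (ht2 : t ≤ 20/7)
    (hE1 : 1 ≤ E) (hEu : E * (1 - t/4)^4 ≤ 1) :
    p * (1 - p) * (E - 1) ≤ (7/20) * t * (1 - p + p * E) := by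
  rcases le_or_gt (1 - p - (7/20)*t) 0 with hc | hc
  · nlinarith [mul_nonneg hp0 (sub_nonneg.2 hE1)]
  · have hu0 : 2/7 ≤ 1 - t/4 := by linarith
    have hu1 : 1 - t/4 ≤ 1 := by linarith
    have hu4 : (0:ℝ) < (1 - t/4)^4 := by positivity
    have key : (7*(1-t/4)-2)^2 * ((1+(1-t/4))*(1+(1-t/4)^2)) ≤ 140 * (1-t/4)^4 :=
      quinticA _ hu0 hu1
    -- (1 - (7/20) t) = (7u-2)/5 with u = 1-t/4;  1 - u^4 = (1-u)(1+u)(1+u^2), 1-u = t/4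
    have hpc : p * (1 - p - (7/20)*t) ≤ (1 - (7/20)*t)^2 / 4 := by
      nlinarith [sq_nonneg (2*p - (1 - (7/20)*t))]
    have hE2 : (E - 1) * (1 - t/4)^4 ≤ 1 - (1 - t/4)^4 := by nlinarith
    have step : p * (1 - p - (7/20)*t) * (E - 1) * (1 - t/4)^4 ≤ (7/20)*t * (1 - t/4)^4 := by
      have l1 : p * (1 - p - (7/20)*t) * ((E-1) * (1 - t/4)^4)
          ≤ p * (1 - p - (7/20)*t) * (1 - (1 - t/4)^4) :=
        mul_le_mul_of_nonneg_left hE2 (mul_nonneg hp0 hc.le)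
      have l2 : p * (1 - p - (7/20)*t) * (1 - (1 - t/4)^4)
          ≤ (1 - (7/20)*t)^2/4 * (1 - (1 - t/4)^4) := by
        have : (0:ℝ) ≤ 1 - (1 - t/4)^4 := by nlinarith
        exact mul_le_mul_of_nonneg_right hpc this
      have l3 : (1 - (7/20)*t)^2/4 * (1 - (1 - t/4)^4) ≤ (7/20)*t * (1 - t/4)^4 := by
        nlinarith [key]
      nlinarith [l1, l2, l3]
    have step2 : p * (1 - p - (7/20)*t) * (E - 1) ≤ (7/20)*t :=
      le_of_mul_le_mul_right (by linarith [step]) hu4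
    calc p * (1 - p) * (E - 1)
        = p * (1 - p - (7/20)*t) * (E - 1) + (7/20)*t*(p*(E-1)) := by ring
      _ ≤ (7/20)*t + (7/20)*t*(p*(E-1)) := by linarith [step2]
      _ = (7/20)*t*(1 - p + p*E) := by ring

lemma pointwiseA (p t : ℝ) (hp0 : 0 ≤ p) (hp1 : p ≤ 1) (ht : 0 ≤ t) :
    p * (1 - p) * (Real.exp t - 1) ≤ (7/20) * t * (1 - p + p * Real.exp t) := by
  have hE1 : 1 ≤ Real.exp t := Real.one_le_exp ht
  rcases le_or_gt t (20/7 : ℝ) with hsmall | hbig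
  · have hu : 2/7 ≤ 1 - t/4 := by linarith
    have hEu : Real.exp t * (1 - t/4)^4 ≤ 1 := by
      have h1 : 1 - t/4 ≤ Real.exp (-(t/4)) := by
        have := Real.add_one_le_exp (-(t/4)); linarith
      have h2 : (1 - t/4)^4 ≤ (Real.exp (-(t/4)))^4 :=
        pow_le_pow_left₀ (by linarith) h1 4
      have h3 : (Real.exp (-(t/4)))^4 = Real.exp (-t) := by
        rw [← Real.exp_nat_mul]; ring_nf
      calc Real.exp t * (1 - t/4)^4 ≤ Real.exp t * Real.exp (-t) := by
            rw [h3] at h2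
            exact mul_le_mul_of_nonneg_left h2 (Real.exp_pos t).le
        _ = 1 := by rw [← Real.exp_add]; simp
    exact polyA p _ t hp0 hp1 ht hsmall hE1 hEu
  · nlinarith [mul_nonneg hp0 (sub_nonneg.2 hE1), mul_nonneg (mul_nonneg hp0 hp0) (sub_nonneg.2 hE1)]


lemma mgfB (p t : ℝ) (hp0 : 0 ≤ p) (hp1 : p ≤ 1) (ht : 0 ≤ t) :
    1 - p + p * Real.exp t ≤ Real.exp (p*t + (7/40)*t^2) := by
  set f : ℝ → ℝ := fun x => (1 - p + p * Real.exp x) * Real.exp (-(p*x + (7/40)*x^2)) with hf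
  have hder : ∀ x : ℝ, HasDerivAt f
      ((p * Real.exp x) * Real.exp (-(p*x + (7/40)*x^2))
        + (1 - p + p * Real.exp x) * (Real.exp (-(p*x + (7/40)*x^2)) * (-(p * 1 + (7/40)*(↑2*x^1))))) x := by
    intro x
    have h1 : HasDerivAt (fun x : ℝ => 1 - p + p * Real.exp x) (p * Real.exp x) x :=
      ((Real.hasDerivAt_exp x).const_mul p).const_add (1 - p)
    have h2i : HasDerivAt (fun x : ℝ => -(p*x + (7/40)*x^2)) (-(p * 1 + (7/40)*(↑2*x^1))) x := by
      exact (((hasDerivAt_id x).const_mul p).add ((hasDerivAt_pow 2 x).const_mul (7/40))).neg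
    exact h1.mul h2i.exp
  have hanti : AntitoneOn f (Set.Ici (0:ℝ)) := by
    apply antitoneOn_of_deriv_nonpos (convex_Ici 0)
    · exact fun x _ => ((hder x).continuousAt).continuousWithinAt
    · exact fun x _ => ((hder x).differentiableAt).differentiableWithinAt
    · intro x hx
      rw [interior_Ici] at hx
      rw [(hder x).deriv]
      have hA := pointwiseA p x hp0 hp1 (le_of_lt hx)
      have hle : p * Real.exp x - (p + (7/20)*x) * (1 - p + p * Real.exp x) ≤ 0 := by nlinarith
      have heq : (p * Real.exp x) * Real.exp (-(p*x + (7/40)*x^2))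
          + (1 - p + p * Real.exp x) * (Real.exp (-(p*x + (7/40)*x^2)) * (-(p * 1 + (7/40)*(↑2*x^1))))
          = Real.exp (-(p*x + (7/40)*x^2))
            * (p * Real.exp x - (p + (7/20)*x) * (1 - p + p * Real.exp x)) := by
        push_cast; ring
      rw [heq]
      exact mul_nonpos_of_nonneg_of_nonpos (Real.exp_pos _).le hle
  have h0 : f 0 = 1 := by simp [hf]
  have h1 : f t ≤ 1 := by
    rw [← h0]; exact hanti Set.self_mem_Ici ht ht
  have h2 := mul_le_mul_of_nonneg_right h1 (Real.exp_pos (p*t + (7/40)*t^2)).le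
  simp only [hf] at h2
  rw [mul_assoc, ← Real.exp_add, one_mul] at h2
  have : -(p * t + 7 / 40 * t ^ 2) + (p * t + 7 / 40 * t ^ 2) = 0 := by ring
  rw [this, Real.exp_zero, mul_one] at h2
  exact h2

open scoped Classical in
lemma chernoff_upper {S : Type} [Fintype S] [Nonempty S] (X : S → ℝ)
    (hX : ∀ s, X s = 0 ∨ X s = 1) (N : ℕ) (ε : ℝ) (hε : 0 ≤ ε) :
    ((Finset.univ.filter (fun shat : Fin N → S =>
        (N:ℝ) * ((∑ s, X s) / (Fintype.card S)) + N * ε ≤ ∑ i, X (shat i))).card : ℝ)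
      ≤ Real.exp (-(10/7) * N * ε^2) * (Fintype.card S)^N := by
  have hcard : (0:ℝ) < (Fintype.card S : ℝ) := by
    exact_mod_cast Fintype.card_pos
  set p : ℝ := (∑ s, X s) / (Fintype.card S) with hp
  have hX0 : ∀ s, 0 ≤ X s := fun s => by rcases hX s with h | h <;> simp [h]
  have hX1 : ∀ s, X s ≤ 1 := fun s => by rcases hX s with h | h <;> simp [h]
  have hp0 : 0 ≤ p := div_nonneg (Finset.sum_nonneg fun s _ => hX0 s) hcard.le
  have hp1 : p ≤ 1 := by
    rw [hp, div_le_one hcard]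
    calc ∑ s, X s ≤ ∑ _s : S, (1:ℝ) := Finset.sum_le_sum fun s _ => hX1 s
      _ = Fintype.card S := by simp
  set t : ℝ := (20/7) * ε with htdef
  have ht0 : 0 ≤ t := by positivity
  -- step 1&2: card ≤ sum of exp over all shat
  have step12 : ((Finset.univ.filter (fun shat : Fin N → S =>
        (N:ℝ) * p + N * ε ≤ ∑ i, X (shat i))).card : ℝ)
      ≤ ∑ shat : Fin N → S, Real.exp (t * (∑ i, X (shat i)) - t * ((N:ℝ)*p + N*ε)) := by
    rw [Finset.card_eq_sum_ones, Nat.cast_sum]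
    refine le_trans (Finset.sum_le_sum fun shat hs => ?_)
      (Finset.sum_le_sum_of_subset_of_nonneg (Finset.filter_subset _ _)
        (fun _ _ _ => (Real.exp_pos _).le))
    simp only [Finset.mem_filter] at hs
    rw [Nat.cast_one]
    apply Real.one_le_exp
    have := hs.2
    nlinarith [mul_le_mul_of_nonneg_left hs.2 ht0]
  -- step 3: factor
  have step3 : ∑ shat : Fin N → S, Real.exp (t * (∑ i, X (shat i)) - t * ((N:ℝ)*p + N*ε))
      = Real.exp (- t * ((N:ℝ)*p + N*ε)) * (∑ s, Real.exp (t * X s))^N := by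
    have h1 : ∀ shat : Fin N → S, Real.exp (t * (∑ i, X (shat i)) - t * ((N:ℝ)*p + N*ε))
        = Real.exp (- t * ((N:ℝ)*p + N*ε)) * ∏ i : Fin N, Real.exp (t * X (shat i)) := by
      intro shat
      rw [← Real.exp_sum, ← Real.exp_add]
      congr 1
      rw [Finset.mul_sum]
      ring
    simp only [h1]
    rw [← Finset.mul_sum]
    congr 1
    have := Finset.prod_univ_sum (fun _ : Fin N => (Finset.univ : Finset S))
      (fun _ s => Real.exp (t * X s))
    rw [Fintype.piFinset_univ] at this
    rw [← this, Finset.prod_const, Finset.card_univ, Fintype.card_fin]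
  -- step 4
  have step4 : ∑ s, Real.exp (t * X s) = (Fintype.card S) * (1 - p + p * Real.exp t) := by
    have h1 : ∀ s, Real.exp (t * X s) = 1 + X s * (Real.exp t - 1) := by
      intro s
      rcases hX s with h | h <;> simp [h]
    simp only [h1]
    rw [Finset.sum_add_distrib, ← Finset.sum_mul]
    have : (∑ s, X s) = p * Fintype.card S := by
      rw [hp]; field_simp
    rw [this]
    simp [Finset.card_univ]
    ring
  -- combine
  have hmgf := mgfB p t hp0 hp1 ht0
  have hbase : (0:ℝ) ≤ 1 - p + p * Real.exp t := by nlinarith [Real.exp_pos t]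
  calc ((Finset.univ.filter (fun shat : Fin N → S =>
        (N:ℝ) * p + N * ε ≤ ∑ i, X (shat i))).card : ℝ)
      ≤ Real.exp (- t * ((N:ℝ)*p + N*ε)) * ((Fintype.card S) * (1 - p + p * Real.exp t))^N := by
        rw [← step4, ← step3]; exact step12
    _ ≤ Real.exp (- t * ((N:ℝ)*p + N*ε)) * ((Fintype.card S) * Real.exp (p*t + (7/40)*t^2))^N := by
        apply mul_le_mul_of_nonneg_left _ (Real.exp_pos _).le
        apply pow_le_pow_left₀ (by positivity)
        exact mul_le_mul_of_nonneg_left hmgf hcard.le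
    _ = Real.exp (-(10/7) * N * ε^2) * (Fintype.card S)^N := by
        rw [mul_pow, ← Real.exp_nat_mul]
        rw [show Real.exp (- t * ((N:ℝ)*p + N*ε)) * ((Fintype.card S:ℝ)^N * Real.exp ((N:ℝ) * (p*t + (7/40)*t^2)))
          = (Real.exp (- t * ((N:ℝ)*p + N*ε)) * Real.exp ((N:ℝ) * (p*t + (7/40)*t^2))) * (Fintype.card S:ℝ)^N by ring]
        rw [← Real.exp_add]
        congr 2
        rw [htdef]; ring

open scoped Classical in
lemma chernoff_two_sided {S : Type} [Fintype S] [Nonempty S] (X : S → ℝ)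
    (hX : ∀ s, X s = 0 ∨ X s = 1) (N : ℕ) (hN : 1 ≤ N) (ε : ℝ) (hε : 0 ≤ ε) :
    ((Finset.univ.filter (fun shat : Fin N → S =>
        ¬ |(∑ s, X s) / (Fintype.card S) - (∑ i, X (shat i)) / N| ≤ ε)).card : ℝ)
      ≤ 2 * Real.exp (-(10/7) * N * ε^2) * (Fintype.card S)^N := by
  have hNpos : (0:ℝ) < N := by exact_mod_cast hN
  have hcard : (0:ℝ) < (Fintype.card S : ℝ) := by exact_mod_cast Fintype.card_pos
  have hYind : ∀ s, (fun s => 1 - X s) s = 0 ∨ (fun s => 1 - X s) s = 1 := fun s => by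
    rcases hX s with h | h <;> simp [h]
  have hYsum : ∀ shat : Fin N → S, (∑ i, (1 - X (shat i))) = (N:ℝ) - ∑ i, X (shat i) := by
    intro shat
    rw [Finset.sum_sub_distrib]
    simp
  have hYtot : (∑ s, (1 - X s)) = (Fintype.card S : ℝ) - ∑ s, X s := by
    rw [Finset.sum_sub_distrib]; simp
  have hsub : (Finset.univ.filter (fun shat : Fin N → S =>
        ¬ |(∑ s, X s) / (Fintype.card S) - (∑ i, X (shat i)) / N| ≤ ε))
      ⊆ (Finset.univ.filter (fun shat : Fin N → S =>
        (N:ℝ) * ((∑ s, X s) / (Fintype.card S)) + N * ε ≤ ∑ i, X (shat i)))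
      ∪ (Finset.univ.filter (fun shat : Fin N → S =>
        (N:ℝ) * ((∑ s, (1 - X s)) / (Fintype.card S)) + N * ε ≤ ∑ i, (1 - X (shat i)))) := by
    intro shat hs
    simp only [Finset.mem_filter, Finset.mem_union, Finset.mem_univ, true_and] at hs ⊢
    rw [not_le] at hs
    rcases lt_abs.1 hs with h | h
    · right
      rw [hYtot, hYsum]
      have h2 : (∑ i, X (shat i)) / N < (∑ s, X s) / (Fintype.card S) - ε := by linarith
      rw [div_lt_iff₀ hNpos] at h2
      have h3 : ((Fintype.card S : ℝ) - ∑ s, X s) / (Fintype.card S)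
          = 1 - (∑ s, X s) / (Fintype.card S) := by field_simp
      rw [h3]
      nlinarith
    · left
      rw [neg_sub] at h
      have h2 : (∑ s, X s) / (Fintype.card S) + ε < (∑ i, X (shat i)) / N := by linarith
      rw [lt_div_iff₀ hNpos] at h2
      nlinarith
  calc ((Finset.univ.filter (fun shat : Fin N → S =>
        ¬ |(∑ s, X s) / (Fintype.card S) - (∑ i, X (shat i)) / N| ≤ ε)).card : ℝ)
      ≤ (((Finset.univ.filter (fun shat : Fin N → S =>
        (N:ℝ) * ((∑ s, X s) / (Fintype.card S)) + N * ε ≤ ∑ i, X (shat i)))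
      ∪ (Finset.univ.filter (fun shat : Fin N → S =>
        (N:ℝ) * ((∑ s, (1 - X s)) / (Fintype.card S)) + N * ε ≤ ∑ i, (1 - X (shat i))))).card : ℝ) := by
        exact_mod_cast Finset.card_le_card hsub
    _ ≤ ((Finset.univ.filter (fun shat : Fin N → S =>
        (N:ℝ) * ((∑ s, X s) / (Fintype.card S)) + N * ε ≤ ∑ i, X (shat i))).card : ℝ)
        + ((Finset.univ.filter (fun shat : Fin N → S =>
        (N:ℝ) * ((∑ s, (1 - X s)) / (Fintype.card S)) + N * ε ≤ ∑ i, (1 - X (shat i)))).card : ℝ) := by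
        exact_mod_cast Finset.card_union_le _ _
    _ ≤ Real.exp (-(10/7) * N * ε^2) * (Fintype.card S)^N
        + Real.exp (-(10/7) * N * ε^2) * (Fintype.card S)^N := by
        gcongr
        · exact chernoff_upper X hX N ε hε
        · exact chernoff_upper (fun s => 1 - X s) hYind N ε hε
    _ = 2 * Real.exp (-(10/7) * N * ε^2) * (Fintype.card S)^N := by ring



/-- Uniform convergence via coherence (Occam/PAC bound with prior `2^χ`): if `σ` has
full support, then for every `δ ∈ (0,1)`, with probability at least `1 − δ` over the
i.i.d. uniform draw of the training contexts `ŝ₁,…,ŝ_N`, the inequality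
`|α(π;π*) − α_train(π;π*)| ≤ √((−2χ(π) + log₂ e + log₂(1/δ))/(2N))` holds
simultaneously for all d-policies `π`. -/
theorem uniform_convergence_via_coherence {M S : Type} [AddCommMonoid M] [DecidableEq M]
    [Fintype S] [DecidableEq S] [Nonempty S] (L : LearningSystem M S)
    (hfs : L.FullSupport) {k : ℕ} (e : Fin k ≃ S) (πs : L.DPolicy)
    (N : ℕ) (hN : 1 ≤ N) (δ : ℝ) (hδ0 : 0 < δ) (hδ1 : δ < 1) :
    1 - δ ≤
      (Nat.card {shat : Fin N → S //
          ∀ π : L.DPolicy,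
            |L.accuracy π πs - L.trainAccuracy shat π πs| ≤
              Real.sqrt ((-2 * L.coherence e π + Real.logb 2 (Real.exp 1) +
                Real.logb 2 (1 / δ)) / (2 * (N : ℝ)))} : ℝ) /
        ((Fintype.card S : ℝ) ^ N) := by
  classical
  have hNpos : (0:ℝ) < N := by exact_mod_cast hN
  have hSc : (0:ℝ) < (Fintype.card S : ℝ) := by exact_mod_cast Fintype.card_pos
  set εf : L.DPolicy → ℝ := fun π =>
    Real.sqrt ((-2 * L.coherence e π + Real.logb 2 (Real.exp 1) + Real.logb 2 (1 / δ)) /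
      (2 * (N : ℝ))) with hεf
  set stuff : L.DPolicy → ℝ := fun π =>
    -2 * L.coherence e π + Real.logb 2 (Real.exp 1) + Real.logb 2 (1 / δ) with hstuffd
  have hstuff0 : ∀ π, 0 ≤ stuff π := by
    intro π
    have h1 := L.coherence_nonpos hfs e π
    have h2 : 0 ≤ Real.logb 2 (Real.exp 1) :=
      Real.logb_nonneg (by norm_num) (Real.one_le_exp zero_le_one)
    have h3 : 0 ≤ Real.logb 2 (1/δ) :=
      Real.logb_nonneg (by norm_num) (by rw [le_div_iff₀ hδ0]; linarith)
    simp only [hstuffd]; linarith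
  have hε2 : ∀ π, (N:ℝ) * (εf π)^2 = stuff π / 2 := by
    intro π
    simp only [hεf]
    rw [Real.sq_sqrt (div_nonneg (hstuff0 π) (by positivity))]
    simp only [hstuffd]
    field_simp
  have hkey : ∀ π : L.DPolicy,
      2 * Real.exp (-(10/7) * N * (εf π)^2) ≤ δ * (2:ℝ) ^ (L.coherence e π) := by
    intro π
    have e1 : -(10/7) * (N:ℝ) * (εf π)^2 = -(5/7) * stuff π := by
      have h := hε2 π
      have : -(10/7) * (N:ℝ) * (εf π)^2 = -(10/7) * ((N:ℝ) * (εf π)^2) := by ring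
      rw [this, h]; ring
    rw [e1]
    have hE1 : (0:ℝ) < Real.exp 1 := Real.exp_pos 1
    have he : (2:ℝ) ≤ Real.exp 1 := by have := Real.add_one_le_exp 1; linarith
    have e2 : Real.exp (-(5/7) * stuff π) ≤ (2:ℝ) ^ (-(stuff π)) := by
      rw [Real.rpow_def_of_pos (by norm_num : (0:ℝ) < 2)]
      apply Real.exp_le_exp.2
      have hl2 : Real.log 2 ≤ 5/7 :=
        le_of_lt (lt_of_lt_of_le Real.log_two_lt_d9 (by norm_num))
      nlinarith [mul_le_mul_of_nonneg_right hl2 (hstuff0 π)]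
    have e3 : (2:ℝ) ^ (-(stuff π)) = (2:ℝ)^(2 * L.coherence e π) * (Real.exp 1)⁻¹ * δ := by
      simp only [hstuffd]
      rw [show -(-2 * L.coherence e π + Real.logb 2 (Real.exp 1) + Real.logb 2 (1/δ))
          = 2 * L.coherence e π + (-Real.logb 2 (Real.exp 1)) + (-Real.logb 2 (1/δ)) by ring]
      rw [Real.rpow_add (by norm_num : (0:ℝ) < 2), Real.rpow_add (by norm_num : (0:ℝ) < 2),
        Real.rpow_neg (by norm_num), Real.rpow_neg (by norm_num)]
      rw [Real.rpow_logb (by norm_num) (by norm_num) (Real.exp_pos 1),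
        Real.rpow_logb (by norm_num) (by norm_num) (by positivity : (0:ℝ) < 1/δ)]
      rw [one_div, inv_inv]
    have e4 : (2:ℝ)^(2 * L.coherence e π) ≤ (2:ℝ)^(L.coherence e π) :=
      Real.rpow_le_rpow_of_exponent_le (by norm_num)
        (by linarith [L.coherence_nonpos hfs e π])
    have hpow_pos : (0:ℝ) < (2:ℝ)^(L.coherence e π) :=
      Real.rpow_pos_of_pos (by norm_num) _
    have h2E : (2:ℝ) * (Real.exp 1)⁻¹ ≤ 1 := by
      rw [← div_eq_mul_inv]
      exact (div_le_one hE1).2 he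
    calc 2 * Real.exp (-(5/7) * stuff π)
        ≤ 2 * ((2:ℝ)^(2 * L.coherence e π) * (Real.exp 1)⁻¹ * δ) := by
          rw [← e3]; exact mul_le_mul_of_nonneg_left e2 (by norm_num)
      _ ≤ 2 * ((2:ℝ)^(L.coherence e π) * (Real.exp 1)⁻¹ * δ) := by
          apply mul_le_mul_of_nonneg_left _ (by norm_num)
          apply mul_le_mul_of_nonneg_right _ hδ0.le
          exact mul_le_mul_of_nonneg_right e4 (by positivity)
      _ = δ * ((2:ℝ)^(L.coherence e π)) * (2 * (Real.exp 1)⁻¹) := by ring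
      _ ≤ δ * ((2:ℝ)^(L.coherence e π)) * 1 := by
          apply mul_le_mul_of_nonneg_left h2E (by positivity)
      _ = δ * (2:ℝ)^(L.coherence e π) := by ring
  -- per-policy count bound
  have hcount : ∀ π : L.DPolicy,
      ((Finset.univ.filter (fun shat : Fin N → S =>
          ¬ |L.accuracy π πs - L.trainAccuracy shat π πs| ≤ εf π)).card : ℝ)
        ≤ δ * (2:ℝ)^(L.coherence e π) * (Fintype.card S : ℝ)^N := by
    intro π
    have hX : ∀ s, (fun s => if (π s : M) = (πs s : M) then (1:ℝ) else 0) s = 0 ∨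
        (fun s => if (π s : M) = (πs s : M) then (1:ℝ) else 0) s = 1 := by
      intro s
      by_cases h : (π s : M) = (πs s : M) <;> simp [h]
    have hc := chernoff_two_sided (fun s => if (π s : M) = (πs s : M) then (1:ℝ) else 0)
      hX N hN (εf π) (Real.sqrt_nonneg _)
    have hfeq : (Finset.univ.filter (fun shat : Fin N → S =>
          ¬ |L.accuracy π πs - L.trainAccuracy shat π πs| ≤ εf π))
        = (Finset.univ.filter (fun shat : Fin N → S =>
          ¬ |(∑ s, if (π s : M) = (πs s : M) then (1:ℝ) else 0) / (Fintype.card S : ℝ)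
            - (∑ i, if (π (shat i) : M) = (πs (shat i) : M) then (1:ℝ) else 0) / (N:ℝ)| ≤ εf π)) := by
      apply Finset.filter_congr
      intro shat _
      simp [LearningSystem.accuracy, LearningSystem.trainAccuracy]
    rw [hfeq]
    calc ((Finset.univ.filter (fun shat : Fin N → S =>
          ¬ |(∑ s, if (π s : M) = (πs s : M) then (1:ℝ) else 0) / (Fintype.card S : ℝ)
            - (∑ i, if (π (shat i) : M) = (πs (shat i) : M) then (1:ℝ) else 0) / (N:ℝ)| ≤ εf π)).card : ℝ)
        ≤ 2 * Real.exp (-(10/7) * N * (εf π)^2) * (Fintype.card S : ℝ)^N := hc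
      _ ≤ δ * (2:ℝ)^(L.coherence e π) * (Fintype.card S : ℝ)^N := by
          exact mul_le_mul_of_nonneg_right (hkey π) (by positivity)
  -- union bound
  have hbadsub : (Finset.univ.filter (fun shat : Fin N → S =>
        ¬ ∀ π : L.DPolicy, |L.accuracy π πs - L.trainAccuracy shat π πs| ≤ εf π))
      ⊆ Finset.univ.biUnion (fun π : L.DPolicy =>
        Finset.univ.filter (fun shat : Fin N → S =>
          ¬ |L.accuracy π πs - L.trainAccuracy shat π πs| ≤ εf π)) := by
    intro shat hs
    simp only [Finset.mem_filter, Finset.mem_univ, true_and, not_forall] at hs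
    obtain ⟨π, hπ⟩ := hs
    simp only [Finset.mem_biUnion, Finset.mem_filter, Finset.mem_univ, true_and]
    exact ⟨π, hπ⟩
  have hbad : ((Finset.univ.filter (fun shat : Fin N → S =>
        ¬ ∀ π : L.DPolicy, |L.accuracy π πs - L.trainAccuracy shat π πs| ≤ εf π)).card : ℝ)
      ≤ δ * (Fintype.card S : ℝ)^N := by
    calc ((Finset.univ.filter (fun shat : Fin N → S =>
          ¬ ∀ π : L.DPolicy, |L.accuracy π πs - L.trainAccuracy shat π πs| ≤ εf π)).card : ℝ)
        ≤ ((Finset.univ.biUnion (fun π : L.DPolicy =>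
            Finset.univ.filter (fun shat : Fin N → S =>
              ¬ |L.accuracy π πs - L.trainAccuracy shat π πs| ≤ εf π))).card : ℝ) := by
          exact_mod_cast Finset.card_le_card hbadsub
      _ ≤ ∑ π : L.DPolicy, ((Finset.univ.filter (fun shat : Fin N → S =>
            ¬ |L.accuracy π πs - L.trainAccuracy shat π πs| ≤ εf π)).card : ℝ) := by
          exact_mod_cast Finset.card_biUnion_le
      _ ≤ ∑ π : L.DPolicy, δ * (2:ℝ)^(L.coherence e π) * (Fintype.card S : ℝ)^N :=
          Finset.sum_le_sum (fun π _ => hcount π)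
      _ = δ * (Fintype.card S : ℝ)^N * ∑ π : L.DPolicy, (2:ℝ)^(L.coherence e π) := by
          rw [Finset.mul_sum]
          apply Finset.sum_congr rfl
          intro π _; ring
      _ = δ * (Fintype.card S : ℝ)^N := by
          have : ∑ π : L.DPolicy, (2:ℝ)^(L.coherence e π)
              = ∑ π : L.DPolicy, L.prodAlong 0 π ⇑e := by
            apply Finset.sum_congr rfl
            intro π _
            exact L.rpow_coherence hfs e π
          rw [this, L.sum_prodAlong e, mul_one]
  -- conclude
  have hcardeq : (Nat.card {shat : Fin N → S //
      ∀ π : L.DPolicy,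
        |L.accuracy π πs - L.trainAccuracy shat π πs| ≤
          Real.sqrt ((-2 * L.coherence e π + Real.logb 2 (Real.exp 1) +
            Real.logb 2 (1 / δ)) / (2 * (N : ℝ)))} : ℕ)
      = (Finset.univ.filter (fun shat : Fin N → S =>
          ∀ π : L.DPolicy, |L.accuracy π πs - L.trainAccuracy shat π πs| ≤ εf π)).card := by
    rw [Nat.card_eq_fintype_card, Fintype.card_subtype]
  rw [hcardeq, le_div_iff₀ (by positivity : (0:ℝ) < (Fintype.card S : ℝ)^N)]
  have hsplit : ((Finset.univ.filter (fun shat : Fin N → S =>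
        ∀ π : L.DPolicy, |L.accuracy π πs - L.trainAccuracy shat π πs| ≤ εf π)).card : ℝ)
      + ((Finset.univ.filter (fun shat : Fin N → S =>
        ¬ ∀ π : L.DPolicy, |L.accuracy π πs - L.trainAccuracy shat π πs| ≤ εf π)).card : ℝ)
      = (Fintype.card S : ℝ)^N := by
    rw [← Nat.cast_add]
    rw [Finset.card_filter_add_card_filter_not]
    rw [Finset.card_univ]
    rw [show Fintype.card (Fin N → S) = Fintype.card S ^ N by
      rw [Fintype.card_fun, Fintype.card_fin]]
    push_cast
    ring
  linarith [hbad, hsplit]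
end
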